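/- arXiv:1909.03559 — 3 statements merged into one kernel-verified Lean document; each statement's English description precedes it below -/
import Mathlib

section
/- Define C_{t,r} := ‖(I − Z_t)K^r‖ (operator norm on L²(a,b)), where Z_t also denotes the L²(a,b)-orthogonal projector onto the subspace Z_t. Then for all integers t, r ≥ 0 and all 0 ≤ s ≤ min{t, r} one has C_{t,r} ≤ C_{t,s} · C_{t−s,r−s}. -/
open MeasureTheory Set
open scoped Classical

noncomputable section

/-- Lebesgue measure restricted to the interval `(a, b)`. -/
def μab (a b : ℝ) : Measure ℝ := volume.restrict (Ioo a b)

/-- The space `L²(a, b)`. -/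
abbrev L2ab (a b : ℝ) := Lp ℝ 2 (μab a b)

/-- The class in `L²(a,b)` of a function `f` (junk value if `f ∉ L²`). -/
def funToL2 (a b : ℝ) (f : ℝ → ℝ) : L2ab a b :=
  if h : MemLp f 2 (μab a b) then h.toLp f else 0

/-- The class in `L²(a,b)` of a polynomial. -/
def polyToL2 (a b : ℝ) (P : Polynomial ℝ) : L2ab a b := funToL2 a b fun x => P.eval x

/-- `𝒫_{n-1}`: the subspace of `L²(a,b)` consisting of (classes of) polynomials of
degree `< n`. -/
def polyLt (a b : ℝ) (n : ℕ) : Submodule ℝ (L2ab a b) where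
  carrier := {f | ∃ P ∈ Polynomial.degreeLT ℝ n, (f : ℝ → ℝ) =ᵐ[μab a b] fun x => P.eval x}
  zero_mem' := ⟨0, Submodule.zero_mem _, by
    filter_upwards [Lp.coeFn_zero (E := ℝ) (p := 2) (μ := μab a b)] with x hx
    simpa using hx⟩
  add_mem' := by
    rintro f g ⟨P, hP, hf⟩ ⟨Q, hQ, hg⟩
    refine ⟨P + Q, Submodule.add_mem _ hP hQ, ?_⟩
    filter_upwards [Lp.coeFn_add f g, hf, hg] with x h1 h2 h3
    simp only [Pi.add_apply] at h1
    exact h1.trans (by rw [h2, h3, Polynomial.eval_add])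
  smul_mem' := by
    rintro c f ⟨P, hP, hf⟩
    refine ⟨c • P, Submodule.smul_mem _ c hP, ?_⟩
    filter_upwards [Lp.coeFn_smul c f, hf] with x h1 h2
    simp only [Pi.smul_apply] at h1
    simp [h1, h2, Polynomial.eval_smul]

/-- The `L²(a,b)`-orthogonal projector onto `Z`, as an endomorphism of `L²(a,b)`. -/
def projCL {a b : ℝ} (Z : Submodule ℝ (L2ab a b)) [Z.HasOrthogonalProjection] :
    L2ab a b →L[ℝ] L2ab a b := Z.subtypeL.comp Z.orthogonalProjectionOnto

/-- `𝔠_{t,r} := ‖(I - Z_t) K^r‖`, the operator norm on `L²(a,b)`. -/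
def Cnorm {a b : ℝ} (Z : ℕ → Submodule ℝ (L2ab a b)) [∀ t, FiniteDimensional ℝ (Z t)]
    (K : L2ab a b →L[ℝ] L2ab a b) (t r : ℕ) : ℝ :=
  ‖(ContinuousLinearMap.id ℝ (L2ab a b) - projCL (Z t)) ∘L (K ^ r)‖

/-!
Since `K` maps `Z_u` into `Z_{u+1}`, the power `K^s` maps `Z_{t-s}` into `Z_t`, so
`(I - Z_t) K^s Z_{t-s} = 0`. Hence `(I - Z_t) K^r = (I - Z_t) K^s (I - Z_{t-s}) K^{r-s}`,
and the bound is submultiplicativity of the operator norm.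
-/

theorem Set.mapsTo_iterate_of_mapsTo_succ {α : Type*} {f : α → α} {S : ℕ → Set α}
    (hf : ∀ u, MapsTo f (S u) (S (u + 1))) (m u : ℕ) : MapsTo f^[m] (S u) (S (u + m)) := by
  induction m generalizing u with
  | zero => exact mapsTo_id _
  | succ m ih =>
    rw [Function.iterate_succ, ← add_assoc, add_right_comm]
    exact (ih (u + 1)).comp (hf u)

namespace Submodule

variable {𝕜 E : Type*} [RCLike 𝕜] [NormedAddCommGroup E] [InnerProductSpace 𝕜 E]
  {U V : Submodule 𝕜 E} [U.HasOrthogonalProjection] [V.HasOrthogonalProjection]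

theorem sub_starProjection_mul_mul_starProjection_eq_zero {A : E →L[𝕜] E}
    (hA : MapsTo A V U) : (1 - U.starProjection) * A * V.starProjection = 0 := by
  ext x
  have hmem : A (V.starProjection x) ∈ U := hA (V.starProjection_apply_mem x)
  simp [starProjection_eq_self_iff.mpr hmem]

theorem norm_sub_starProjection_mul_le {A : E →L[𝕜] E} (hA : MapsTo A V U) (B : E →L[𝕜] E) :
    ‖(1 - U.starProjection) * (A * B)‖ ≤
      ‖(1 - U.starProjection) * A‖ * ‖(1 - V.starProjection) * B‖ := by
  have hsplit : (1 - U.starProjection) * (A * B) =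
      (1 - U.starProjection) * A * ((1 - V.starProjection) * B) :=
    calc (1 - U.starProjection) * (A * B)
        = (1 - U.starProjection) * A * B - (1 - U.starProjection) * A * V.starProjection * B := by
          rw [sub_starProjection_mul_mul_starProjection_eq_zero hA, zero_mul, sub_zero, mul_assoc]
      _ = (1 - U.starProjection) * A * ((1 - V.starProjection) * B) := by noncomm_ring
  rw [hsplit]
  exact norm_mul_le _ _

end Submodule

theorem statement1_general
    (a b : ℝ)
    (K : L2ab a b →L[ℝ] L2ab a b)
    (Z : ℕ → Submodule ℝ (L2ab a b)) [∀ t, FiniteDimensional ℝ (Z t)]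
    (hrec : ∀ s : ℕ, Z (s + 1) = polyLt a b 1 ⊔ (Z s).map (K : L2ab a b →ₗ[ℝ] L2ab a b))
    (t r s : ℕ) (hst : s ≤ t) (hsr : s ≤ r) :
    Cnorm Z K t r ≤ Cnorm Z K t s * Cnorm Z K (t - s) (r - s) := by
  have hK : ∀ u, MapsTo K (Z u) (Z (u + 1)) := fun u x hx => by
    rw [hrec u]
    exact Submodule.mem_sup_right (Submodule.mem_map_of_mem hx)
  have hKs : MapsTo (K ^ s) (Z (t - s)) (Z t) := by
    have h := mapsTo_iterate_of_mapsTo_succ hK s (t - s)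
    rwa [Nat.sub_add_cancel hst, ← FunLike.coe_pow_eq_iterate] at h
  have hpow : K ^ r = K ^ s * K ^ (r - s) := by rw [← pow_add, Nat.add_sub_cancel' hsr]
  show ‖(1 - (Z t).starProjection) * K ^ r‖ ≤
    ‖(1 - (Z t).starProjection) * K ^ s‖ * ‖(1 - (Z (t - s)).starProjection) * K ^ (r - s)‖
  rw [hpow]
  exact Submodule.norm_sub_starProjection_mul_le hKs _

/-- With `𝔠_{t,r} := ‖(I - Z_t)K^r‖`, for all `t, r ≥ 0` and all
`0 ≤ s ≤ min {t, r}` one has `𝔠_{t,r} ≤ 𝔠_{t,s} ⬝ 𝔠_{t-s,r-s}`. -/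
theorem statement1
    (a b : ℝ) (hab : a < b)
    (K : L2ab a b →L[ℝ] L2ab a b) (ker : ℝ → ℝ → ℝ)
    (hker : ∀ f : L2ab a b, ∀ᵐ x ∂μab a b, (K f) x = ∫ y in Ioo a b, ker x y * f y)
    (Z : ℕ → Submodule ℝ (L2ab a b)) [∀ t, FiniteDimensional ℝ (Z t)]
    (hZ0 : polyLt a b 1 ≤ Z 0)
    (hrec : ∀ s : ℕ, Z (s + 1) = polyLt a b 1 ⊔ (Z s).map (K : L2ab a b →ₗ[ℝ] L2ab a b))
    (hrec' : ∀ s : ℕ, Z (s + 1) = polyLt a b 1 ⊔ (Z s).map (ContinuousLinearMap.adjoint K : L2ab a b →ₗ[ℝ] L2ab a b))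
    (t r s : ℕ) (hst : s ≤ t) (hsr : s ≤ r) :
    Cnorm Z K t r ≤ Cnorm Z K t s * Cnorm Z K (t - s) (r - s) :=
  statement1_general a b K Z hrec t r s hst hsr
end
end

section
/- Define C_{t,r} := ‖(I − Z_t)K^r‖ and C := max{‖(I − Z_0)K‖, ‖(I − Z_0)K*‖} (operator norms on L²(a,b)), where Z_t also denotes the L²(a,b)-orthogonal projector onto the subspace Z_t. Then for all integers r ≥ 1 and t ≥ r − 1 one has C_{t,r} ≤ C_{t,1} · C_{t−1,1} ⋯ C_{t−r+1,1} ≤ C^r. -/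
open MeasureTheory Set
open scoped Classical

noncomputable section

/-!
Write `Q_s` for the projector onto `Z_sᗮ`, i.e. `I - Z_s`. Since `K` maps `Z_s` into `Z_{s+1}`,
`Q_{s+1} K` vanishes on `Z_s`, so `Q_{s+1} K = Q_{s+1} K Q_s`. Iterating this identity splits
`Q_t K^r` into the factors `Q_{t-i} K`, which gives the product bound. For the second bound,
`‖Q_{s+1} K‖ = ‖Q_{s+1} K Q_s‖ ≤ ‖K Q_s‖ = ‖Q_s K*‖`, and symmetrically with `K*` in place of `K`,
so `max (‖Q_s K‖, ‖Q_s K*‖)` is non-increasing in `s`.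
-/

open ContinuousLinearMap Submodule

section StarProjectionOrthogonal

variable {𝕜 E : Type*} [RCLike 𝕜] [NormedAddCommGroup E] [InnerProductSpace 𝕜 E]

theorem starProjection_orthogonal_mul_mul_starProjection_orthogonal {A : E →L[𝕜] E}
    {V W : Submodule 𝕜 E} [V.HasOrthogonalProjection] [W.HasOrthogonalProjection]
    (h : W.map (A : E →ₗ[𝕜] E) ≤ V) :
    Vᗮ.starProjection * A * Wᗮ.starProjection = Vᗮ.starProjection * A := by
  rw [starProjection_orthogonal' W, mul_sub, mul_one, sub_eq_self]
  ext x
  exact starProjection_orthogonal_apply_eq_zero (h (mem_map_of_mem (W.starProjection_apply_mem x)))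

theorem norm_starProjection_orthogonal_mul_le_of_map_le [CompleteSpace E] {A : E →L[𝕜] E}
    {V W : Submodule 𝕜 E} [V.HasOrthogonalProjection] [W.HasOrthogonalProjection]
    (h : W.map (A : E →ₗ[𝕜] E) ≤ V) :
    ‖Vᗮ.starProjection * A‖ ≤ ‖Wᗮ.starProjection * adjoint A‖ :=
  calc ‖Vᗮ.starProjection * A‖ = ‖Vᗮ.starProjection * (A * Wᗮ.starProjection)‖ := by
        rw [← mul_assoc, starProjection_orthogonal_mul_mul_starProjection_orthogonal h]
    _ ≤ ‖A * Wᗮ.starProjection‖ :=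
        (norm_mul_le _ _).trans (mul_le_of_le_one_left (norm_nonneg _) (starProjection_norm_le _))
    _ = ‖Wᗮ.starProjection * adjoint A‖ := by
        rw [← norm_star, star_mul, (isSelfAdjoint_starProjection _).star_eq, star_eq_adjoint]

end StarProjectionOrthogonal

section Chain

variable {𝕜 E : Type*} [RCLike 𝕜] [NormedAddCommGroup E] [InnerProductSpace 𝕜 E]
  {Z : ℕ → Submodule 𝕜 E} [∀ s, (Z s).HasOrthogonalProjection] {A : E →L[𝕜] E}

theorem norm_starProjection_orthogonal_mul_pow_succ_le
    (hA : ∀ s, (Z s).map (A : E →ₗ[𝕜] E) ≤ Z (s + 1)) (t r : ℕ) :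
    ‖(Z (t + 1))ᗮ.starProjection * A ^ (r + 1)‖ ≤
      ‖(Z (t + 1))ᗮ.starProjection * A‖ * ‖(Z t)ᗮ.starProjection * A ^ r‖ :=
  calc ‖(Z (t + 1))ᗮ.starProjection * A ^ (r + 1)‖
      = ‖(Z (t + 1))ᗮ.starProjection * A * ((Z t)ᗮ.starProjection * A ^ r)‖ := by
        rw [← mul_assoc, starProjection_orthogonal_mul_mul_starProjection_orthogonal (hA t),
          mul_assoc, pow_succ']
    _ ≤ _ := norm_mul_le _ _

theorem norm_starProjection_orthogonal_mul_pow_le_prod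
    (hA : ∀ s, (Z s).map (A : E →ₗ[𝕜] E) ≤ Z (s + 1)) {r t : ℕ} (hr : 1 ≤ r)
    (htr : r - 1 ≤ t) :
    ‖(Z t)ᗮ.starProjection * A ^ r‖ ≤ ∏ i ∈ Finset.range r, ‖(Z (t - i))ᗮ.starProjection * A‖ := by
  induction r, hr using Nat.le_induction generalizing t with
  | base => simp
  | succ r hr ih =>
    obtain ⟨u, rfl⟩ : ∃ u, t = u + 1 := ⟨t - 1, by omega⟩
    rw [Finset.prod_range_succ', Nat.sub_zero, mul_comm]
    refine (norm_starProjection_orthogonal_mul_pow_succ_le hA u r).trans ?_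
    gcongr
    simpa only [Nat.succ_sub_succ] using ih (by omega)

theorem antitone_max_norm_starProjection_orthogonal_mul [CompleteSpace E]
    (hA : ∀ s, (Z s).map (A : E →ₗ[𝕜] E) ≤ Z (s + 1))
    (hA' : ∀ s, (Z s).map (adjoint A : E →ₗ[𝕜] E) ≤ Z (s + 1)) :
    Antitone fun s ↦
      max ‖(Z s)ᗮ.starProjection * A‖ ‖(Z s)ᗮ.starProjection * adjoint A‖ := by
  refine antitone_nat_of_succ_le fun s ↦ max_le ?_ ?_
  · exact (norm_starProjection_orthogonal_mul_le_of_map_le (hA s)).trans (le_max_right _ _)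
  · refine (norm_starProjection_orthogonal_mul_le_of_map_le (hA' s)).trans ?_
    rw [adjoint_adjoint]
    exact le_max_left _ _

end Chain

theorem statement2_general
    (a b : ℝ)
    (K : L2ab a b →L[ℝ] L2ab a b)
    (Z : ℕ → Submodule ℝ (L2ab a b)) [∀ t, FiniteDimensional ℝ (Z t)]
    (hrec : ∀ s : ℕ, Z (s + 1) = polyLt a b 1 ⊔ (Z s).map (K : L2ab a b →ₗ[ℝ] L2ab a b))
    (hrec' : ∀ s : ℕ, Z (s + 1) = polyLt a b 1 ⊔ (Z s).map (ContinuousLinearMap.adjoint K : L2ab a b →ₗ[ℝ] L2ab a b))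
    (t r : ℕ) (hr : 1 ≤ r) (htr : r - 1 ≤ t) :
    Cnorm Z K t r ≤ ∏ i ∈ Finset.range r, Cnorm Z K (t - i) 1 ∧
      ∏ i ∈ Finset.range r, Cnorm Z K (t - i) 1 ≤
        (max (Cnorm Z K 0 1) (Cnorm Z (ContinuousLinearMap.adjoint K) 0 1)) ^ r := by
  have hCnorm (B : L2ab a b →L[ℝ] L2ab a b) (s n : ℕ) :
      Cnorm Z B s n = ‖(Z s)ᗮ.starProjection * B ^ n‖ := by
    rw [Cnorm, starProjection_orthogonal]
    rfl
  have hK (s : ℕ) : (Z s).map (K : L2ab a b →ₗ[ℝ] L2ab a b) ≤ Z (s + 1) :=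
    hrec s ▸ le_sup_right
  have hK' (s : ℕ) : (Z s).map (adjoint K : L2ab a b →ₗ[ℝ] L2ab a b) ≤ Z (s + 1) :=
    hrec' s ▸ le_sup_right
  simp only [hCnorm, pow_one]
  refine ⟨norm_starProjection_orthogonal_mul_pow_le_prod hK hr htr, ?_⟩
  calc ∏ i ∈ Finset.range r, ‖(Z (t - i))ᗮ.starProjection * K‖
      ≤ ∏ _i ∈ Finset.range r, max ‖(Z 0)ᗮ.starProjection * K‖ ‖(Z 0)ᗮ.starProjection * adjoint K‖ :=
        Finset.prod_le_prod (fun _ _ ↦ norm_nonneg _) fun i _ ↦ (le_max_left _ _).trans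
          (antitone_max_norm_starProjection_orthogonal_mul hK hK' (Nat.zero_le (t - i)))
    _ = _ := by rw [Finset.prod_const, Finset.card_range]

/-- With `𝔠_{t,r} := ‖(I - Z_t)K^r‖` and
`𝔠 := max {‖(I - Z_0)K‖, ‖(I - Z_0)K^*‖}`, for all `r ≥ 1` and `t ≥ r - 1` one has
`𝔠_{t,r} ≤ 𝔠_{t,1} ⬝ 𝔠_{t-1,1} ⋯ 𝔠_{t-r+1,1} ≤ 𝔠^r`. -/
theorem statement2
    (a b : ℝ) (hab : a < b)
    (K : L2ab a b →L[ℝ] L2ab a b) (ker : ℝ → ℝ → ℝ)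
    (hker : ∀ f : L2ab a b, ∀ᵐ x ∂μab a b, (K f) x = ∫ y in Ioo a b, ker x y * f y)
    (Z : ℕ → Submodule ℝ (L2ab a b)) [∀ t, FiniteDimensional ℝ (Z t)]
    (hZ0 : polyLt a b 1 ≤ Z 0)
    (hrec : ∀ s : ℕ, Z (s + 1) = polyLt a b 1 ⊔ (Z s).map (K : L2ab a b →ₗ[ℝ] L2ab a b))
    (hrec' : ∀ s : ℕ, Z (s + 1) = polyLt a b 1 ⊔ (Z s).map (ContinuousLinearMap.adjoint K : L2ab a b →ₗ[ℝ] L2ab a b))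
    (t r : ℕ) (hr : 1 ≤ r) (htr : r - 1 ≤ t) :
    Cnorm Z K t r ≤ ∏ i ∈ Finset.range r, Cnorm Z K (t - i) 1 ∧
      ∏ i ∈ Finset.range r, Cnorm Z K (t - i) 1 ≤
        (max (Cnorm Z K 0 1) (Cnorm Z (ContinuousLinearMap.adjoint K) 0 1)) ^ r :=
  statement2_general a b K Z hrec hrec' t r hr htr
end
end

section
/- Let X_t and Y_t denote the L²(a,b)-orthogonal projectors onto the subspaces X_t and Y_t. Then for every t ≥ 1 one has ‖K − K Y_t‖ ≤ ‖K* − K* X_{t−1}‖, and moreover ‖K* − K* X_{t−1}‖ ≤ ‖K − X_0 K‖ if t is odd and ‖K* − K* X_{t−1}‖ ≤ ‖K* − Y_0 K*‖ if t is even (operator norms on L²(a,b)). -/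
open MeasureTheory Set
open scoped Classical

noncomputable section

/-!
Write `P_Z` for the orthogonal projector onto `Z`. Since `K P_{Y_s}` has range in
`K(Y_s) = X_{s+1}` and `P_{X_{s+1}} K` is the best approximation of `K` by operators with
range in `X_{s+1}`, we get `‖K - P_{X_{s+1}} K‖ ≤ ‖K - K P_{Y_s}‖`; taking adjoints (which
preserves norms, `P` being self-adjoint) gives `‖K* - K* P_{X_{s+1}}‖ ≤ ‖K - K P_{Y_s}‖`.
Symmetrically `‖K - K P_{Y_{s+1}}‖ ≤ ‖K* - K* P_{X_s}‖`. Chaining these two inequalities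
makes `s ↦ ‖K* - K* P_{X_s}‖` decrease along every second step, down to `s = 0` or `s = 1`.
-/

open ContinuousLinearMap

namespace Submodule

variable {𝕜 E F : Type*} [RCLike 𝕜]
  [NormedAddCommGroup E] [InnerProductSpace 𝕜 E] [NormedAddCommGroup F] [InnerProductSpace 𝕜 F]

theorem norm_sub_starProjection_apply_le (Z : Submodule 𝕜 E) [Z.HasOrthogonalProjection]
    (y : E) {v : E} (hv : v ∈ Z) : ‖y - Z.starProjection y‖ ≤ ‖y - v‖ := by
  rw [starProjection_minimal]
  exact ciInf_le ⟨0, by rintro _ ⟨w, rfl⟩; exact norm_nonneg _⟩ (⟨v, hv⟩ : Z)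

theorem norm_sub_starProjection_comp_le {G : Type*} [SeminormedAddCommGroup G]
    [NormedSpace 𝕜 G] (Z : Submodule 𝕜 E) [Z.HasOrthogonalProjection] (T S : G →L[𝕜] E)
    (hS : ∀ x, S x ∈ Z) : ‖T - Z.starProjection ∘L T‖ ≤ ‖T - S‖ :=
  opNorm_le_bound _ (norm_nonneg _) fun x =>
    (Z.norm_sub_starProjection_apply_le (T x) (hS x)).trans ((T - S).le_opNorm x)

variable [CompleteSpace E] [CompleteSpace F]

theorem norm_sub_starProjection_comp_eq (Z : Submodule 𝕜 F) [CompleteSpace Z]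
    (T : E →L[𝕜] F) :
    ‖T - Z.starProjection ∘L T‖ = ‖adjoint T - adjoint T ∘L Z.starProjection‖ := by
  rw [← adjoint.norm_map, map_sub, adjoint_comp, (isSelfAdjoint_starProjection Z).adjoint_eq]

theorem norm_adjoint_sub_comp_starProjection_le_of_map_le (T : E →L[𝕜] F)
    (Y : Submodule 𝕜 E) [CompleteSpace Y] (Z : Submodule 𝕜 F) [CompleteSpace Z]
    (hYZ : Y.map (T : E →ₗ[𝕜] F) ≤ Z) :
    ‖adjoint T - adjoint T ∘L Z.starProjection‖ ≤ ‖T - T ∘L Y.starProjection‖ := by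
  rw [← norm_sub_starProjection_comp_eq]
  exact norm_sub_starProjection_comp_le _ T _ fun x => hYZ (mem_map_of_mem (coe_mem _))

end Submodule

theorem projCL_eq_starProjection {a b : ℝ} (Z : Submodule ℝ (L2ab a b))
    [Z.HasOrthogonalProjection] : projCL Z = Z.starProjection :=
  rfl

theorem apply_add_two_mul_le {α : Type*} [Preorder α] {A : ℕ → α} (h : ∀ s, A (s + 2) ≤ A s)
    (s m : ℕ) : A (s + 2 * m) ≤ A s := by
  induction m with
  | zero => rfl
  | succ m ih => exact (h (s + 2 * m)).trans ih

theorem statement15_general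
    (a b : ℝ)
    (K : L2ab a b →L[ℝ] L2ab a b)
    (X Y : ℕ → Submodule ℝ (L2ab a b))
    [∀ t, FiniteDimensional ℝ (X t)] [∀ t, FiniteDimensional ℝ (Y t)]
    (hrecX : ∀ s : ℕ, X (s + 1) = (Y s).map (K : L2ab a b →ₗ[ℝ] L2ab a b))
    (hrecY : ∀ s : ℕ, Y (s + 1) = (X s).map (ContinuousLinearMap.adjoint K : L2ab a b →ₗ[ℝ] L2ab a b))
    (t : ℕ) (ht : 1 ≤ t) :
    ‖K - K ∘L projCL (Y t)‖ ≤
        ‖ContinuousLinearMap.adjoint K - ContinuousLinearMap.adjoint K ∘L projCL (X (t - 1))‖ ∧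
      (Odd t →
        ‖ContinuousLinearMap.adjoint K - ContinuousLinearMap.adjoint K ∘L projCL (X (t - 1))‖ ≤
          ‖K - projCL (X 0) ∘L K‖) ∧
      (Even t →
        ‖ContinuousLinearMap.adjoint K - ContinuousLinearMap.adjoint K ∘L projCL (X (t - 1))‖ ≤
          ‖ContinuousLinearMap.adjoint K - projCL (Y 0) ∘L ContinuousLinearMap.adjoint K‖) := by
  simp only [projCL_eq_starProjection]
  set A := fun s => ‖adjoint K - adjoint K ∘L (X s).starProjection‖
  set B := fun s => ‖K - K ∘L (Y s).starProjection‖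
  have hXY (s : ℕ) : A (s + 1) ≤ B s :=
    Submodule.norm_adjoint_sub_comp_starProjection_le_of_map_le K _ _ (hrecX s).ge
  have hYX (s : ℕ) : B (s + 1) ≤ A s := by
    simpa only [adjoint_adjoint] using
      Submodule.norm_adjoint_sub_comp_starProjection_le_of_map_le (adjoint K) _ _ (hrecY s).ge
  have hA2 (s : ℕ) : A (s + 2) ≤ A s := (hXY (s + 1)).trans (hYX s)
  obtain ⟨s, rfl⟩ := Nat.exists_eq_add_of_le' ht
  refine ⟨hYX s, fun hodd => ?_, fun heven => ?_⟩
  · obtain ⟨m, rfl⟩ : Even s := by simpa [Nat.odd_add_one] using hodd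
    rw [Submodule.norm_sub_starProjection_comp_eq, ← two_mul]
    simpa using apply_add_two_mul_le hA2 0 m
  · obtain ⟨m, rfl⟩ : Odd s := by simpa [Nat.even_add_one] using heven
    rw [Submodule.norm_sub_starProjection_comp_eq, adjoint_adjoint, add_comm]
    exact (apply_add_two_mul_le hA2 1 m).trans (hXY 0)

/-- Let `K` be a bounded integral operator on `L²(a,b)` with kernel
`ker`, let `X_0, Y_0` be finite-dimensional subspaces and `X_t := K(Y_{t-1})`,
`Y_t := K^*(X_{t-1})` for `t ≥ 1`.  Then for every `t ≥ 1`,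
`‖K - K Y_t‖ ≤ ‖K^* - K^* X_{t-1}‖`, which is moreover bounded by `‖K - X_0 K‖` if `t` is
odd and by `‖K^* - Y_0 K^*‖` if `t` is even. -/
theorem statement15
    (a b : ℝ) (hab : a < b)
    (K : L2ab a b →L[ℝ] L2ab a b) (ker : ℝ → ℝ → ℝ)
    (hker : ∀ f : L2ab a b, ∀ᵐ x ∂μab a b, (K f) x = ∫ y in Ioo a b, ker x y * f y)
    (X Y : ℕ → Submodule ℝ (L2ab a b))
    [∀ t, FiniteDimensional ℝ (X t)] [∀ t, FiniteDimensional ℝ (Y t)]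
    (hrecX : ∀ s : ℕ, X (s + 1) = (Y s).map (K : L2ab a b →ₗ[ℝ] L2ab a b))
    (hrecY : ∀ s : ℕ, Y (s + 1) = (X s).map (ContinuousLinearMap.adjoint K : L2ab a b →ₗ[ℝ] L2ab a b))
    (t : ℕ) (ht : 1 ≤ t) :
    ‖K - K ∘L projCL (Y t)‖ ≤
        ‖ContinuousLinearMap.adjoint K - ContinuousLinearMap.adjoint K ∘L projCL (X (t - 1))‖ ∧
      (Odd t →
        ‖ContinuousLinearMap.adjoint K - ContinuousLinearMap.adjoint K ∘L projCL (X (t - 1))‖ ≤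
          ‖K - projCL (X 0) ∘L K‖) ∧
      (Even t →
        ‖ContinuousLinearMap.adjoint K - ContinuousLinearMap.adjoint K ∘L projCL (X (t - 1))‖ ≤
          ‖ContinuousLinearMap.adjoint K - projCL (Y 0) ∘L ContinuousLinearMap.adjoint K‖) :=
  statement15_general a b K X Y hrecX hrecY t ht
end
end
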